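/- arXiv:math/0306225 — 4 statements merged into one kernel-verified Lean document; each statement's English description precedes it below -/
import Mathlib

section
/- Let fₙ satisfy the binary search tree recurrence fₙ = tₙ + (2/n) Σ_{k=0}^{n-1} f_k for n ≥ 1 with f₀ = t₀ = 0, where the toll is tₙ = C(n+α, α) for a fixed real α ≠ 1 (α not a negative integer). Then fₙ = ((α+1)/(α-1)) · ( C(n+α, α) − (n+1) ) for all n ≥ 0. -/
open Finset

/-- The generalized binomial coefficient `C(n+α, α) = (α+1)(α+2)⋯(α+n)/n!`. -/
noncomputable def gb (α : ℝ) (n : ℕ) : ℝ :=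
  (∏ i ∈ range n, (α + (i + 1))) / (n.factorial : ℝ)

lemma gb_succ (α : ℝ) (n : ℕ) :
    gb α (n + 1) = gb α n * (α + (n + 1)) / (n + 1) := by
  have h1 : ((n:ℝ) + 1) ≠ 0 := by positivity
  have h2 : ((n.factorial : ℝ)) ≠ 0 := Nat.cast_ne_zero.mpr n.factorial_ne_zero
  simp only [gb, prod_range_succ, Nat.factorial_succ]
  push_cast
  rw [div_mul_eq_mul_div, div_div, mul_comm ((n:ℝ)+1)]

lemma sum_gb (α : ℝ) (hα : α + 1 ≠ 0) (n : ℕ) :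
    ∑ k ∈ range n, gb α k = ((n : ℝ) / (α + 1)) * gb α n := by
  induction n with
  | zero => simp
  | succ m ih =>
    rw [sum_range_succ, ih, gb_succ]
    have h1 : ((m:ℝ) + 1) ≠ 0 := by positivity
    push_cast
    field_simp
    ring

lemma sum_id (n : ℕ) : ∑ k ∈ range n, ((k : ℝ) + 1) = (n : ℝ) * ((n : ℝ) + 1) / 2 := by
  induction n with
  | zero => simp
  | succ m ih =>
    rw [sum_range_succ, ih]
    push_cast
    ring

/-- Binary search tree recurrence with toll `tₙ = C(n+α,α)`, `α ≠ 1` not a negative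
integer: the solution is `fₙ = ((α+1)/(α-1))·(C(n+α,α) − (n+1))`. -/
theorem bst_recurrence_binomial_toll (α : ℝ) (hα1 : α ≠ 1)
    (hneg : ∀ m : ℕ, α ≠ -((m : ℝ) + 1))
    (t f : ℕ → ℝ) (ht0 : t 0 = 0) (ht : ∀ n : ℕ, 1 ≤ n → t n = gb α n)
    (hf0 : f 0 = 0)
    (hf : ∀ n : ℕ, 1 ≤ n → f n = t n + (2 / (n : ℝ)) * ∑ k ∈ range n, f k) :
    ∀ n : ℕ, f n = ((α + 1) / (α - 1)) * (gb α n - ((n : ℝ) + 1)) := by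
  have ha : α + 1 ≠ 0 := by
    intro h; exact hneg 0 (by push_cast; linarith)
  have ha1 : α - 1 ≠ 0 := sub_ne_zero.mpr hα1
  intro n
  induction n using Nat.strong_induction_on with
  | _ n ih =>
    match n with
    | 0 => simp [hf0, gb]
    | Nat.succ m =>
      rw [hf (m+1) (by omega), ht (m+1) (by omega)]
      have hsum : ∑ k ∈ range (m+1), f k =
          ((α + 1) / (α - 1)) * (((m:ℝ)+1) / (α + 1) * gb α (m+1)
            - ((m:ℝ)+1) * ((m:ℝ)+2) / 2) := by
        rw [sum_congr rfl fun k hk => ih k (mem_range.mp hk)]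
        rw [← mul_sum, sum_sub_distrib, sum_gb α ha, sum_id]
        push_cast
        ring
      rw [hsum]
      have hm : ((m:ℝ) + 1) ≠ 0 := by positivity
      push_cast
      field_simp
      ring
end

section
/- Let fₙ satisfy the binary search tree recurrence fₙ = tₙ + (2/n) Σ_{k=0}^{n-1} f_k for n ≥ 1 with f₀ = t₀ = 0 and toll tₙ = n+1. Then fₙ = 2(n+1)(H_{n+1} − 1) for all n ≥ 0, where H_m = Σ_{j=1}^m 1/j is the m-th harmonic number. -/
open Finset

/-- The `m`-th harmonic number `H_m = Σ_{j=1}^m 1/j`. -/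
noncomputable def harmonic' (m : ℕ) : ℝ := ∑ j ∈ Icc 1 m, (1 : ℝ) / j

lemma harmonic'_succ (m : ℕ) : harmonic' (m + 1) = harmonic' m + 1 / (m + 1) := by
  unfold harmonic'
  rw [Finset.sum_Icc_succ_top (by omega)]
  push_cast
  ring

lemma sum_g (n : ℕ) :
    ∑ k ∈ range n, 2 * ((k : ℝ) + 1) * (harmonic' (k + 1) - 1)
      = (n : ℝ) * (n + 1) * (harmonic' (n + 1) - 3 / 2) := by
  induction n with
  | zero => simp
  | succ n ih =>
      rw [Finset.sum_range_succ, ih, harmonic'_succ (n + 1)]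
      have h : ((n : ℝ) + 1 + 1) ≠ 0 := by positivity
      push_cast
      field_simp
      ring

/-- Binary search tree recurrence with toll `tₙ = n+1`: the solution is
`fₙ = 2(n+1)(H_{n+1} − 1)`. -/
theorem bst_recurrence_linear_toll (t f : ℕ → ℝ)
    (ht0 : t 0 = 0) (ht : ∀ n : ℕ, 1 ≤ n → t n = (n : ℝ) + 1)
    (hf0 : f 0 = 0)
    (hf : ∀ n : ℕ, 1 ≤ n → f n = t n + (2 / (n : ℝ)) * ∑ k ∈ range n, f k) :
    ∀ n : ℕ, f n = 2 * ((n : ℝ) + 1) * (harmonic' (n + 1) - 1) := by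
  intro n
  induction n using Nat.strong_induction_on with
  | _ n ih =>
    rcases Nat.eq_zero_or_pos n with rfl | hn
    · simp [hf0, harmonic']
    · rw [hf n hn, ht n hn]
      have hsum : ∑ k ∈ range n, f k
          = ∑ k ∈ range n, 2 * ((k : ℝ) + 1) * (harmonic' (k + 1) - 1) :=
        Finset.sum_congr rfl fun k hk => ih k (Finset.mem_range.mp hk)
      rw [hsum, sum_g]
      have hn0 : (n : ℝ) ≠ 0 := by positivity
      field_simp
      ring
end

section
/- Let (tₙ) be a toll sequence with t₀ = 0 and fₙ the solution of the uniform binary tree recurrence fₙ = tₙ + Σ_{k=0}^{n-1} (C_k C_{n-1-k}/C_n)(f_k + f_{n-1-k}) for n ≥ 1 with f₀ = 0. Then the normalized generating functions f(z) = Σ fₙ Cₙ zⁿ and t(z) = Σ tₙ Cₙ zⁿ satisfy f(z) = t(z) + 2 z C(z) f(z), equivalently f(z) · √(1-4z) = t(z), as formal power series. -/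
open Finset PowerSeries

/-- The `n`-th Catalan number as a rational number. -/
def cat (n : ℕ) : ℚ := ((2 * n).choose n : ℚ) / (n + 1)

/-- The Catalan generating function `C(z) = Σ Cₙ zⁿ`. -/
def catGF : PowerSeries ℚ := PowerSeries.mk fun n => cat n

lemma cat_ne (n : ℕ) : cat n ≠ 0 := by
  unfold cat
  have h1 : (0:ℚ) < ((2*n).choose n : ℚ) := by
    exact_mod_cast Nat.choose_pos (by omega)
  have h2 : (0:ℚ) < (n:ℚ) + 1 := by positivity
  positivity

/-- Under the uniform binary tree recurrence, the normalized generating functions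
`f(z) = Σ fₙ Cₙ zⁿ` and `t(z) = Σ tₙ Cₙ zⁿ` satisfy `f = t + 2zC(z)f`, equivalently
`f(z)·√(1-4z) = t(z)` where `√(1-4z) = 1 - 2zC(z)`, as formal power series. -/
theorem uniform_binary_tree_gf (t f : ℕ → ℚ) (ht0 : t 0 = 0) (hf0 : f 0 = 0)
    (hrec : ∀ n : ℕ, 1 ≤ n →
      f n = t n + ∑ k ∈ range n, (cat k * cat (n - 1 - k) / cat n) * (f k + f (n - 1 - k))) :
    (PowerSeries.mk fun n => f n * cat n)
        = (PowerSeries.mk fun n => t n * cat n)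
          + 2 * X * catGF * (PowerSeries.mk fun n => f n * cat n) ∧
    (PowerSeries.mk fun n => f n * cat n) * (1 - 2 * X * catGF)
        = (PowerSeries.mk fun n => t n * cat n) := by
  have h1 : (PowerSeries.mk fun n => f n * cat n)
        = (PowerSeries.mk fun n => t n * cat n)
          + 2 * X * catGF * (PowerSeries.mk fun n => f n * cat n) := by
    have hre : 2 * X * catGF * (PowerSeries.mk fun n => f n * cat n)
        = X * (catGF * (PowerSeries.mk fun n => f n * cat n)
            + catGF * (PowerSeries.mk fun n => f n * cat n)) := by ring
    ext n
    rw [map_add, hre]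
    match n with
    | 0 =>
      simp [hf0, ht0]
    | n + 1 =>
      rw [PowerSeries.coeff_succ_X_mul, map_add, PowerSeries.coeff_mul,
        Finset.Nat.sum_antidiagonal_eq_sum_range_succ_mk]
      simp only [coeff_mk, catGF]
      set S := ∑ k ∈ range (n+1), cat k * (f (n - k) * cat (n - k)) with hS
      have hrefl : ∑ k ∈ range (n+1), cat (n-k) * (f k * cat k) = S := by
        rw [hS, ← Finset.sum_range_reflect (fun k => cat (n-k) * (f k * cat k)) (n+1)]
        apply Finset.sum_congr rfl
        intro k hk
        simp only [mem_range] at hk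
        have h1 : n + 1 - 1 - k = n - k := by omega
        have h2 : n - (n - k) = k := by omega
        rw [h1, h2]
      have := hrec (n+1) (by omega)
      have hmul := congrArg (· * cat (n+1)) this
      simp only [add_mul, Finset.sum_mul] at hmul
      rw [hmul]
      have hsum : ∀ k ∈ range (n+1),
          cat k * cat (n + 1 - 1 - k) / cat (n+1) * (f k + f (n + 1 - 1 - k)) * cat (n+1)
          = cat (n-k) * (f k * cat k) + cat k * (f (n-k) * cat (n-k)) := by
        intro k hk
        simp only [mem_range] at hk
        have h1 : n + 1 - 1 - k = n - k := by omega
        rw [h1]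
        field_simp [cat_ne]
      rw [Finset.sum_congr rfl hsum, Finset.sum_add_distrib, hrefl]
  exact ⟨h1, by linear_combination h1⟩
end

section
/- Let f be analytic in a Delta-domain Δ(φ, η) = {z : |z| < 1+η, |Arg(z−1)| > φ} with 0 < φ < π/2, η > 0, and suppose f(z) = O(|1−z|^A) uniformly on Δ(φ,η) for some real A. Then on any strictly smaller Delta-domain Δ(φ', η') with φ < φ' < π/2 and 0 < η' < η, the derivative satisfies f'(z) = O(|1−z|^{A−1}). -/
/-!
Cauchy's estimate on the circle of radius `κ |z - 1|` around `z`. For `κ` small in terms of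
`φ' - φ` and `η - η'` the closed disc lies in `Δ(φ, η)` whenever `z ∈ Δ(φ', η')`, and on the
circle `|1 - w|` is comparable to `|1 - z|`, so `|f| = O(|1 - z|^A)` there; dividing by the
radius `κ |1 - z|` gives `|f'(z)| = O(|1 - z|^(A - 1))`.
-/

open Complex Real

/-- The Delta-domain `Δ(φ, η) = {z : |z| < 1+η, |Arg(z−1)| > φ}`. -/
def DeltaDomain (φ η : ℝ) : Set ℂ :=
  {z : ℂ | ‖z‖ < 1 + η ∧ φ < |Complex.arg (z - 1)|}

open Metric Filter Topology

theorem lt_abs_arg_iff_re_lt {φ : ℝ} (hφ₀ : 0 ≤ φ) (hφπ : φ ≤ π) (ζ : ℂ) :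
    φ < |arg ζ| ↔ ζ.re < ‖ζ‖ * Real.cos φ := by
  rcases eq_or_ne ζ 0 with rfl | hζ
  · simpa using hφ₀
  rw [← norm_mul_cos_arg, ← Real.cos_abs (arg ζ), mul_lt_mul_iff_right₀ (norm_pos_iff.2 hζ)]
  exact (Real.strictAntiOn_cos.lt_iff_gt ⟨abs_nonneg _, abs_arg_le_pi ζ⟩ ⟨hφ₀, hφπ⟩).symm

theorem one_notMem_deltaDomain {φ η : ℝ} (hφ : 0 ≤ φ) : (1 : ℂ) ∉ DeltaDomain φ η := by
  simpa [DeltaDomain] using fun _ => hφ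

/-- A disc around `ζ` of radius `κ ‖ζ‖` stays inside a wider sector around the positive axis
when `κ (1 + c) ≤ c - c'`. -/
theorem re_lt_norm_mul_of_norm_sub_le {ζ ω : ℂ} {c c' κ : ℝ} (hc : 0 ≤ c)
    (hζ : ζ.re < ‖ζ‖ * c') (hκ : κ * (1 + c) ≤ c - c') (hω : ‖ω - ζ‖ ≤ κ * ‖ζ‖) :
    ω.re < ‖ω‖ * c := by
  have hre : ω.re ≤ ζ.re + κ * ‖ζ‖ := by
    have := re_le_norm (ω - ζ)
    rw [sub_re] at this
    linarith
  have hnorm : (1 - κ) * ‖ζ‖ ≤ ‖ω‖ := by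
    have := norm_sub_norm_le ζ ω
    rw [norm_sub_rev] at this
    linarith
  calc ω.re < ‖ζ‖ * (c' + κ) := by linarith
    _ ≤ (1 - κ) * ‖ζ‖ * c := by nlinarith [norm_nonneg ζ]
    _ ≤ ‖ω‖ * c := mul_le_mul_of_nonneg_right hnorm hc

theorem closedBall_subset_deltaDomain {φ η φ' η' κ : ℝ} (hφ₀ : 0 ≤ φ) (hφ : φ ≤ π / 2)
    (hφ'₀ : 0 ≤ φ') (hφ' : φ' ≤ π) (hκ : 0 ≤ κ) (hκη : κ * (2 + η') ≤ η - η')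
    (hκφ : κ * (1 + Real.cos φ) ≤ Real.cos φ - Real.cos φ') {z : ℂ}
    (hz : z ∈ DeltaDomain φ' η') : closedBall z (κ * ‖z - 1‖) ⊆ DeltaDomain φ η := by
  obtain ⟨hz_norm, hz_arg⟩ := hz
  intro w hw
  rw [mem_closedBall, Complex.dist_eq] at hw
  refine ⟨?_, ?_⟩
  · have hz1 : ‖z - 1‖ ≤ ‖z‖ + 1 := by simpa using norm_sub_le z 1
    have hw_le : ‖w‖ ≤ ‖w - z‖ + ‖z‖ := norm_le_norm_sub_add w z
    nlinarith
  · rw [lt_abs_arg_iff_re_lt hφ₀ (by linarith [pi_pos])]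
    refine re_lt_norm_mul_of_norm_sub_le (cos_nonneg_of_mem_Icc ⟨by linarith, hφ⟩)
      ((lt_abs_arg_iff_re_lt hφ'₀ hφ' _).1 hz_arg) hκφ ?_
    simpa using hw

theorem rpow_le_rpow_add_rpow_of_le_of_le {a b x : ℝ} (A : ℝ) (ha : 0 < a) (hax : a ≤ x)
    (hxb : x ≤ b) : x ^ A ≤ a ^ A + b ^ A := by
  rcases le_or_gt 0 A with hA | hA
  · linarith [rpow_le_rpow (ha.le.trans hax) hxb hA, rpow_nonneg ha.le A]
  · linarith [rpow_le_rpow_of_nonpos ha hax hA.le, rpow_nonneg (ha.le.trans (hax.trans hxb)) A]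

theorem norm_rpow_le_of_norm_sub_le {E : Type*} [SeminormedAddCommGroup E] {x y : E} {κ : ℝ}
    (A : ℝ) (hx : 0 < ‖x‖) (hκ : κ < 1) (hxy : ‖y - x‖ ≤ κ * ‖x‖) :
    ‖y‖ ^ A ≤ ((1 - κ) ^ A + (1 + κ) ^ A) * ‖x‖ ^ A := by
  have hlow : (1 - κ) * ‖x‖ ≤ ‖y‖ := by
    have := norm_sub_norm_le x y
    rw [norm_sub_rev] at this
    linarith
  have hhigh : ‖y‖ ≤ (1 + κ) * ‖x‖ := by
    have := norm_le_norm_sub_add y x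
    linarith
  have hκ₀ : 0 ≤ 1 + κ := nonneg_of_mul_nonneg_left ((norm_nonneg y).trans hhigh) hx
  have := rpow_le_rpow_add_rpow_of_le_of_le A (mul_pos (by linarith) hx) hlow hhigh
  rwa [mul_rpow (by linarith) hx.le, mul_rpow hκ₀ hx.le, ← add_mul] at this

theorem eventually_nhds_zero_mul_lt {a b : ℝ} (hb : 0 < b) : ∀ᶠ κ in 𝓝 (0 : ℝ), κ * a < b := by
  have : Tendsto (· * a) (𝓝 (0 : ℝ)) (𝓝 0) := by
    simpa using (continuous_mul_const a).tendsto 0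
  exact this.eventually (gt_mem_nhds hb)

theorem norm_deriv_le_of_closedBall_subset {U : Set ℂ} {f : ℂ → ℂ} {C A κ : ℝ} {z : ℂ}
    (hf : DifferentiableOn ℂ f U) (hC : ∀ w ∈ U, ‖f w‖ ≤ C * ‖1 - w‖ ^ A) (hκ0 : 0 < κ)
    (hκ1 : κ < 1) (hz : z ≠ 1) (hball : closedBall z (κ * ‖z - 1‖) ⊆ U) :
    ‖deriv f z‖ ≤ |C| * ((1 - κ) ^ A + (1 + κ) ^ A) / κ * ‖1 - z‖ ^ (A - 1) := by
  have hd : 0 < ‖1 - z‖ := norm_pos_iff.2 (sub_ne_zero.2 hz.symm)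
  rw [norm_sub_rev z] at hball
  have hsphere : ∀ w ∈ sphere z (κ * ‖1 - z‖),
      ‖f w‖ ≤ |C| * ((1 - κ) ^ A + (1 + κ) ^ A) * ‖1 - z‖ ^ A := by
    intro w hw
    have hw' : ‖(1 - w) - (1 - z)‖ ≤ κ * ‖1 - z‖ := by
      rw [mem_sphere, Complex.dist_eq] at hw
      rw [sub_sub_sub_cancel_left, norm_sub_rev z, hw]
    calc ‖f w‖ ≤ C * ‖1 - w‖ ^ A := hC w (hball (sphere_subset_closedBall hw))
      _ ≤ |C| * ‖1 - w‖ ^ A := by gcongr; exact le_abs_self C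
      _ ≤ |C| * (((1 - κ) ^ A + (1 + κ) ^ A) * ‖1 - z‖ ^ A) := by
        gcongr
        exact norm_rpow_le_of_norm_sub_le A hd hκ1 hw'
      _ = _ := by ring
  calc ‖deriv f z‖ ≤ |C| * ((1 - κ) ^ A + (1 + κ) ^ A) * ‖1 - z‖ ^ A / (κ * ‖1 - z‖) :=
        norm_deriv_le_of_forall_mem_sphere_norm_le (mul_pos hκ0 hd) (hf.diffContOnCl_ball hball)
          hsphere
    _ = _ := by
      rw [rpow_sub_one hd.ne']
      field_simp

theorem singular_differentiation_general (φ η A : ℝ) (hφ : 0 < φ) (hφ' : φ < π / 2)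
    (f : ℂ → ℂ)
    (hf : DifferentiableOn ℂ f (DeltaDomain φ η))
    (hO : ∃ C : ℝ, ∀ z ∈ DeltaDomain φ η, ‖f z‖ ≤ C * ‖1 - z‖ ^ A) :
    ∀ φ' η' : ℝ, φ < φ' → φ' < π / 2 → 0 < η' → η' < η →
      ∃ C' : ℝ, ∀ z ∈ DeltaDomain φ' η',
        ‖deriv f z‖ ≤ C' * ‖1 - z‖ ^ (A - 1) := by
  intro φ' η' hφφ' hφ'π _ hη'η
  obtain ⟨C, hC⟩ := hO
  have hcos : Real.cos φ' < Real.cos φ :=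
    Real.strictAntiOn_cos ⟨hφ.le, by linarith⟩ ⟨by linarith, by linarith⟩ hφφ'
  obtain ⟨κ, ⟨⟨hκη, hκφ⟩, hκ1⟩, hκ0⟩ :=
    ((((eventually_nhds_zero_mul_lt (a := 2 + η') (sub_pos.2 hη'η)).and
      (eventually_nhds_zero_mul_lt (a := 1 + Real.cos φ) (sub_pos.2 hcos))).and
      (gt_mem_nhds one_pos)).filter_mono nhdsWithin_le_nhds).and
      (self_mem_nhdsWithin (s := Set.Ioi 0)) |>.exists
  refine ⟨|C| * ((1 - κ) ^ A + (1 + κ) ^ A) / κ, fun z hz => ?_⟩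
  have hz1 : z ≠ 1 := ne_of_mem_of_not_mem hz (one_notMem_deltaDomain (by linarith))
  exact norm_deriv_le_of_closedBall_subset hf hC hκ0 hκ1 hz1 <|
    closedBall_subset_deltaDomain hφ.le hφ'.le (by linarith) (by linarith [pi_pos])
      hκ0.le hκη.le hκφ.le hz

/-- Singular differentiation of O-transfers: if `f` is analytic on `Δ(φ,η)` with
`f(z) = O(|1−z|^A)` there, then on any strictly smaller Delta-domain `Δ(φ',η')`
one has `f'(z) = O(|1−z|^{A−1})`. -/
theorem singular_differentiation (φ η A : ℝ) (hφ : 0 < φ) (hφ' : φ < π / 2)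
    (hη : 0 < η) (f : ℂ → ℂ)
    (hf : DifferentiableOn ℂ f (DeltaDomain φ η))
    (hO : ∃ C : ℝ, ∀ z ∈ DeltaDomain φ η, ‖f z‖ ≤ C * ‖1 - z‖ ^ A) :
    ∀ φ' η' : ℝ, φ < φ' → φ' < π / 2 → 0 < η' → η' < η →
      ∃ C' : ℝ, ∀ z ∈ DeltaDomain φ' η',
        ‖deriv f z‖ ≤ C' * ‖1 - z‖ ^ (A - 1) :=
  singular_differentiation_general φ η A hφ hφ' f hf hO
end
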